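/- arXiv:1507.01337 — 3 statements merged into one kernel-verified Lean document; each statement's English description precedes it below -/
import Mathlib

section
/- Let f be a polynomial in R[x_1,...,x_n] that is a sum of squares, let A be a nonzero vector of nonnegative integers, and for each square summand g_i in a representation f = Σ g_i^2, let g_{i,w} denote the A-lowest homogeneous part of g_i with respect to common minimal A-weight w = min_i min{A·α : α ∈ supp g_i}. Then the A-lowest part of f equals Σ_i g_{i,w}^2. -/
open MvPolynomial

/-- The `A`-weight of an exponent vector. -/
def wtA {n : ℕ} (A : Fin n → ℕ) (α : Fin n →₀ ℕ) : ℕ := ∑ i, A i * α i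

/-- The part of `f` consisting of terms of `A`-weight exactly `v`. -/
noncomputable def weightPart {n : ℕ} (A : Fin n → ℕ) (v : ℕ) (f : MvPolynomial (Fin n) ℝ) :
    MvPolynomial (Fin n) ℝ :=
  ∑ α ∈ f.support.filter (fun α => wtA A α = v), monomial α (coeff α f)

/-!
Every exponent occurring in some `gᵢ` has weight at least `w`, so every exponent of `f` has weight
at least `2w`, and the weight-`2w` component of `gᵢ²` is `g_{i,w}²`. Hence the weight-`2w` component
of `f` is `Σ g_{i,w}²`. It is nonzero: some `g_{i,w}` is nonzero by the choice of `w`, and a sum of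
squares of real polynomials vanishes only if every summand does (evaluate at real points). So `2w`
is the lowest weight of `f`.
-/

namespace MvPolynomial

open Finset Finsupp

variable {σ R M : Type*} [CommSemiring R] [AddCommMonoid M] {w : σ → M}

theorem le_weight_of_mem_support_sum [LE M] {ι : Type*} {s : Finset ι}
    {p : ι → MvPolynomial σ R} {a : M} (hp : ∀ i ∈ s, ∀ d ∈ (p i).support, a ≤ weight w d) :
    ∀ d ∈ (∑ i ∈ s, p i).support, a ≤ weight w d := by
  classical
  intro d hd
  obtain ⟨i, hi, hd⟩ := mem_biUnion.1 (support_sum hd)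
  exact hp i hi d hd

theorem isLeast_weight_image_support_of_weightedHomogeneousComponent_ne_zero [Preorder M]
    {p : MvPolynomial σ R} {m : M} (hp : ∀ d ∈ p.support, m ≤ weight w d)
    (hm : weightedHomogeneousComponent w m p ≠ 0) : IsLeast (weight w '' (p.support : Set (σ →₀ ℕ))) m := by
  classical
  refine ⟨?_, fun _ ⟨d, hd, hdm⟩ => hdm ▸ hp d hd⟩
  obtain ⟨d, hd⟩ := (support_nonempty (p := weightedHomogeneousComponent w m p)).2 hm
  rw [support_weightedHomogeneousComponent, mem_filter] at hd
  exact ⟨d, hd⟩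

section OrderedCancel

variable [PartialOrder M] [IsOrderedCancelAddMonoid M] {p q : MvPolynomial σ R} {a b : M}

theorem le_weight_of_mem_support_mul (hp : ∀ d ∈ p.support, a ≤ weight w d)
    (hq : ∀ d ∈ q.support, b ≤ weight w d) : ∀ d ∈ (p * q).support, a + b ≤ weight w d := by
  classical
  intro d hd
  obtain ⟨x, hx, y, hy, rfl⟩ := Finset.mem_add.1 (support_mul p q hd)
  rw [map_add]
  exact add_le_add (hp x hx) (hq y hy)

theorem weightedHomogeneousComponent_mul_of_le_weight (hp : ∀ d ∈ p.support, a ≤ weight w d)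
    (hq : ∀ d ∈ q.support, b ≤ weight w d) :
    weightedHomogeneousComponent w (a + b) (p * q) =
      weightedHomogeneousComponent w a p * weightedHomogeneousComponent w b q := by
  classical
  ext d
  rw [coeff_weightedHomogeneousComponent]
  split_ifs with hd
  · rw [coeff_mul, coeff_mul]
    refine sum_congr rfl fun x hx => ?_
    simp only [coeff_weightedHomogeneousComponent]
    by_cases hx_weight : weight w x.1 = a ∧ weight w x.2 = b
    · simp only [hx_weight, if_true]
    · have hx_zero : coeff x.1 p * coeff x.2 q = 0 := by
        by_contra hne
        refine hx_weight (((add_eq_add_iff_eq_and_eq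
          (hp _ (mem_support_iff.2 (left_ne_zero_of_mul hne)))
          (hq _ (mem_support_iff.2 (right_ne_zero_of_mul hne)))).1 ?_).imp Eq.symm Eq.symm)
        rw [← map_add, mem_antidiagonal.1 hx, hd]
      rw [hx_zero]
      split_ifs <;> simp_all
  · exact (((weightedHomogeneousComponent_isWeightedHomogeneous a p).mul
      (weightedHomogeneousComponent_isWeightedHomogeneous b q)).coeff_eq_zero d hd).symm

end OrderedCancel

theorem sum_sq_eq_zero_iff {R ι : Type*} [CommRing R] [LinearOrder R] [IsStrictOrderedRing R]
    {s : Finset ι} {p : ι → MvPolynomial σ R} : ∑ i ∈ s, p i ^ 2 = 0 ↔ ∀ i ∈ s, p i = 0 := by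
  refine ⟨fun h i hi => funext fun x => ?_, fun h => sum_eq_zero fun i hi => by simp [h i hi]⟩
  have hx := congrArg (eval x) h
  simp only [map_sum, map_pow, map_zero] at hx
  simpa using (sum_eq_zero_iff_of_nonneg fun j _ => sq_nonneg (eval x (p j))).1 hx i hi

end MvPolynomial

theorem wtA_eq_weight {n : ℕ} (A : Fin n → ℕ) : wtA A = Finsupp.weight A := by
  funext α
  simp [wtA, Finsupp.weight_eq_sum, mul_comm]

theorem weightPart_eq_weightedHomogeneousComponent {n : ℕ} (A : Fin n → ℕ) (v : ℕ)
    (f : MvPolynomial (Fin n) ℝ) : weightPart A v f = weightedHomogeneousComponent A v f := by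
  rw [weightPart, weightedHomogeneousComponent_apply, wtA_eq_weight]

theorem lowest_part_eq_sum_sq_lowest_parts_general (n : ℕ) (f : MvPolynomial (Fin n) ℝ)
    (s : Finset ℕ) (g : ℕ → MvPolynomial (Fin n) ℝ) (hrep : f = ∑ i ∈ s, g i ^ 2)
    (A : Fin n → ℕ) (w : ℕ)
    (hw : IsLeast {w' | ∃ i ∈ s, ∃ α ∈ (g i).support, wtA A α = w'} w)
    (v : ℕ) (hv : IsLeast {v' | ∃ α ∈ f.support, wtA A α = v'} v) :
    weightPart A v f = ∑ i ∈ s, (weightPart A w (g i)) ^ 2 := by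
  simp only [wtA_eq_weight, weightPart_eq_weightedHomogeneousComponent] at hw hv ⊢
  have hg : ∀ i ∈ s, ∀ d ∈ (g i).support, w ≤ Finsupp.weight A d :=
    fun i hi d hd => hw.2 ⟨i, hi, d, hd, rfl⟩
  have hf : ∀ d ∈ f.support, w + w ≤ Finsupp.weight A d :=
    hrep ▸ le_weight_of_mem_support_sum fun i hi =>
      sq (g i) ▸ le_weight_of_mem_support_mul (hg i hi) (hg i hi)
  have hlow : weightedHomogeneousComponent A (w + w) f =
      ∑ i ∈ s, weightedHomogeneousComponent A w (g i) ^ 2 := by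
    rw [hrep, map_sum]
    exact Finset.sum_congr rfl fun i hi => by
      rw [sq, sq, weightedHomogeneousComponent_mul_of_le_weight (hg i hi) (hg i hi)]
  have hlow_ne : weightedHomogeneousComponent A (w + w) f ≠ 0 := by
    obtain ⟨i, hi, d, hd, rfl⟩ := hw.1
    rw [hlow, Ne, sum_sq_eq_zero_iff]
    exact fun h => mem_support_iff.1 hd (by simpa [coeff_weightedHomogeneousComponent] using congrArg (coeff d) (h i hi))
  rw [hv.unique (isLeast_weight_image_support_of_weightedHomogeneousComponent_ne_zero hf hlow_ne),
    hlow]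

/-- If `f = Σ_{i ∈ s} gᵢ²` is nonzero, `A` a nonzero weight vector, `w` the common minimal
`A`-weight over the supports of the `gᵢ` and `v` the minimal `A`-weight of the support of `f`,
then the `A`-lowest part of `f` equals `Σ_i g_{i,w}²`. -/
theorem lowest_part_eq_sum_sq_lowest_parts (n : ℕ) (f : MvPolynomial (Fin n) ℝ) (hf : f ≠ 0)
    (s : Finset ℕ) (g : ℕ → MvPolynomial (Fin n) ℝ) (hrep : f = ∑ i ∈ s, g i ^ 2)
    (A : Fin n → ℕ) (hA : A ≠ 0) (w : ℕ)
    (hw : IsLeast {w' | ∃ i ∈ s, ∃ α ∈ (g i).support, wtA A α = w'} w)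
    (v : ℕ) (hv : IsLeast {v' | ∃ α ∈ f.support, wtA A α = v'} v) :
    weightPart A v f = ∑ i ∈ s, (weightPart A w (g i)) ^ 2 :=
  lowest_part_eq_sum_sq_lowest_parts_general n f s g hrep A w hw v hv
end

section
/- Let f ∈ R[x] with f(0) = 0, let γ be a face of the Newton diagram Γ(f), and suppose f_γ lies in the relative interior of the cone of sums of squares of polynomials with support in (1/2)γ. Then for any a > 0 and any α in bconv Δ_E(f_γ) \ γ, both f_γ + a x^α and f_γ - a x^α are sums of squares of formal power series. -/
open MvPolynomial

noncomputable section
attribute [local instance] Classical.propDecidable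

/-- The real point associated to an exponent vector. -/
def expPt {n : ℕ} (α : Fin n →₀ ℕ) : Fin n → ℝ := fun i => (α i : ℝ)

/-- `Δ(f) = ⋃_{α ∈ supp f} (α + ℝ₊ⁿ)`. -/
def DeltaSet {n : ℕ} (f : MvPolynomial (Fin n) ℝ) : Set (Fin n → ℝ) :=
  {x | ∃ α ∈ f.support, ∀ i, (α i : ℝ) ≤ x i}

/-- The Newton polyhedron `conv Δ(f)`. -/
def NewtonPolyhedron {n : ℕ} (f : MvPolynomial (Fin n) ℝ) : Set (Fin n → ℝ) :=
  convexHull ℝ (DeltaSet f)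

/-- `F` is a (nonempty) face of `P`, cut out by a supporting hyperplane. -/
def IsFaceOf {n : ℕ} (P F : Set (Fin n → ℝ)) : Prop :=
  F.Nonempty ∧ ∃ (A : Fin n → ℝ) (c : ℝ), A ≠ 0 ∧ (∀ x ∈ P, c ≤ ∑ i, A i * x i) ∧
    F = {x ∈ P | ∑ i, A i * x i = c}

/-- A compact face of `P`. -/
def IsCompactFaceOf {n : ℕ} (P F : Set (Fin n → ℝ)) : Prop := IsFaceOf P F ∧ IsCompact F

/-- The Newton diagram: the union of the compact faces of the Newton polyhedron. -/
def NewtonDiagram {n : ℕ} (f : MvPolynomial (Fin n) ℝ) : Set (Fin n → ℝ) :=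
  ⋃ F ∈ {F | IsCompactFaceOf (NewtonPolyhedron f) F}, F

/-- A maximal (compact) face of the Newton diagram of `f`. -/
def IsMaximalFace {n : ℕ} (f : MvPolynomial (Fin n) ℝ) (γ : Set (Fin n → ℝ)) : Prop :=
  IsCompactFaceOf (NewtonPolyhedron f) γ ∧
    ∀ γ', IsCompactFaceOf (NewtonPolyhedron f) γ' → γ ⊆ γ' → γ' = γ

/-- `f_γ`: the sum of the terms of `f` whose exponents lie in `γ`. -/
def facePart {n : ℕ} (f : MvPolynomial (Fin n) ℝ) (γ : Set (Fin n → ℝ)) :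
    MvPolynomial (Fin n) ℝ :=
  ∑ α ∈ f.support.filter (fun α => expPt α ∈ γ), monomial α (coeff α f)

/-- Sums of squares of polynomials supported in `(1/2)γ`, i.e. whose squared factors only
involve exponents `α` with `2α ∈ γ`. -/
def sosHalfSupported {n : ℕ} (γ : Set (Fin n → ℝ)) : Set (MvPolynomial (Fin n) ℝ) :=
  {p | ∃ l : Multiset (MvPolynomial (Fin n) ℝ),
    (∀ q ∈ l, ∀ α ∈ q.support, (2 : ℝ) • expPt α ∈ γ) ∧ p = (l.map (· ^ 2)).sum}

/-- Algebraic characterization of membership in the relative interior of a convex set `C`: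
`x ∈ C` and every segment from a point of `C` to `x` can be prolonged beyond `x` within `C`. -/
def MemRint {V : Type*} [AddCommGroup V] [Module ℝ V] (C : Set V) (x : V) : Prop :=
  x ∈ C ∧ ∀ y ∈ C, ∃ μ : ℝ, 1 < μ ∧ μ • x + (1 - μ) • y ∈ C

/-- `Δ_E(f)`: union of `α + ℝ₊ⁿ` over the even exponents `α` in the support of `f`. -/
def DeltaESet {n : ℕ} (f : MvPolynomial (Fin n) ℝ) : Set (Fin n → ℝ) :=
  {x | ∃ α ∈ f.support, (∀ i, Even (α i)) ∧ ∀ i, (α i : ℝ) ≤ x i}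

/-- `α ∈ bconv E`: `α` is a binary (dyadic) convex combination with full digits of even
integer points of `E`. -/
def MemBconv {n : ℕ} (E : Set (Fin n → ℝ)) (α : Fin n →₀ ℕ) : Prop :=
  ∃ (t N : ℕ) (A : Fin t → Fin n →₀ ℕ) (δ : Fin t → Fin N → Bool),
    0 < t ∧
    (∀ s, expPt (A s) ∈ E ∧ ∀ i, Even (A s i)) ∧
    (∀ s : Fin t, 0 < ∑ k : Fin N, (if δ s k then ((2 : ℚ) ^ (k.1 + 1))⁻¹ else 0)) ∧
    (∑ s : Fin t, ∑ k : Fin N, (if δ s k then ((2 : ℚ) ^ (k.1 + 1))⁻¹ else 0)) = 1 ∧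
    (∀ k : Fin N, ∃ s, δ s k = true) ∧
    (∀ i, (α i : ℚ) = ∑ s : Fin t,
      (∑ k : Fin N, (if δ s k then ((2 : ℚ) ^ (k.1 + 1))⁻¹ else 0)) * (A s i : ℚ))

/-- `f` has a regular Newton polyhedron: every vertex of `Γ(f)` is even with positive
coefficient, and for each maximal face `γ` every "bad" exponent of `f` inside
`conv Δ(f_γ) \ γ` lies in `bconv Δ_E(f_γ)`. -/
def RegularNewtonPolyhedron {n : ℕ} (f : MvPolynomial (Fin n) ℝ) : Prop :=
  (∀ α : Fin n →₀ ℕ, expPt α ∈ Set.extremePoints ℝ (NewtonPolyhedron f) →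
    (∀ i, Even (α i)) ∧ 0 < coeff α f) ∧
  (∀ γ, IsMaximalFace f γ → ∀ α ∈ f.support,
    expPt α ∈ convexHull ℝ (DeltaSet (facePart f γ)) → expPt α ∉ γ →
    ((¬ ∀ i, Even (α i)) ∨ coeff α f < 0) →
    MemBconv (DeltaESet (facePart f γ)) α)

/-! Write `α = ∑ λ_s A_s` with dyadic weights `λ_s` and even `A_s ≥ B_s = 2 b_s`, where the
`B_s` are even exponents of `f_γ`, and put `A_s = 2 b_s + d_s`. The polynomial
`p = ∑ λ_s x^{2 b_s}` lies in the cone, so relative interiority gives `f_γ = c z + ε p` with `z`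
in the cone and `c, ε > 0`; it remains to write `ε p + e x^α` as a sum of squares for every real
`e`. Peel off the first binary digit. If a single index `s₀` carries it, completing the square
`(ε/2) x^{2 b_{s₀}} + e x^α = (√(ε/2) x^{b_{s₀}} + …)² - (e²/2ε) x^{2α - 2 b_{s₀}}` leaves a problem
of the same shape with one digit fewer, the shifts `d_s + d_{s₀}`, and `ε/2`. If two indices
`s₁, s₂` carry it, the remainder is `x^{2 b_{s₂}} (ε/2 - (e²/2ε) x^{d_{s₁} + d_{s₂}})`, and
`d_{s₁} + d_{s₂} ≠ 0` because `α ∉ γ`; a power series with positive constant term is a square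
(take `√c` times the binomial series of `√(1 + y)`). -/
theorem IsSumSq.map {R S : Type*} [NonAssocSemiring R] [NonAssocSemiring S] (φ : R →+* S)
    {s : R} (h : IsSumSq s) : IsSumSq (φ s) := by
  induction h with
  | zero => simp
  | sq_add a _ ih => simpa using ih.sq_add (φ a)

theorem IsSumSq.multiset_sum_map_sq {R : Type*} [CommSemiring R] (l : Multiset R) :
    IsSumSq (l.map (· ^ 2)).sum := by
  induction l using Multiset.induction_on with
  | empty => simp
  | cons a l ih => simpa [pow_two] using ih.sq_add a

theorem IsSumSq.smul_of_nonneg {A : Type*} [CommSemiring A] [Algebra ℝ A] {c : ℝ} (hc : 0 ≤ c)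
    {s : A} (h : IsSumSq s) : IsSumSq (c • s) := by
  rw [Algebra.smul_def, ← Real.mul_self_sqrt hc, map_mul]
  exact (IsSumSq.mul_self _).mul h

theorem IsSumSq.smul_mul_self_add {A : Type*} [CommRing A] [Algebra ℝ A] {c : ℝ} (hc : 0 < c)
    (e : ℝ) (x y : A) {r : A} (h : IsSumSq (r - (e ^ 2 / (4 * c)) • (y * y))) :
    IsSumSq (c • (x * x) + e • (x * y) + r) := by
  obtain ⟨s, hs, rfl⟩ : ∃ s, 0 < s ∧ c = s * s :=
    ⟨√c, Real.sqrt_pos.mpr hc, (Real.mul_self_sqrt hc.le).symm⟩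
  convert h.sq_add (s • x + (e / (2 * s)) • y) using 1
  simp only [add_mul, mul_add, smul_mul_smul_comm, mul_comm y x]
  field_simp
  module

theorem MvPowerSeries.isSquare_of_constantCoeff_pos {σ : Type*} {F : MvPowerSeries σ ℝ}
    (hF : 0 < MvPowerSeries.constantCoeff F) : IsSquare F := by
  set c := MvPowerSeries.constantCoeff F
  set y := c⁻¹ • F - 1
  have hy : PowerSeries.HasSubst y := .of_constantCoeff_zero (by simp [y, c, hF.ne'])
  set S := (PowerSeries.binomialSeries ℝ (1 / 2 : ℝ)).subst y
  have hS : S * S = c⁻¹ • F := by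
    rw [← PowerSeries.subst_mul hy, ← PowerSeries.binomialSeries_add, add_halves,
      ← Nat.cast_one, PowerSeries.binomialSeries_nat, pow_one, PowerSeries.subst_add hy,
      PowerSeries.subst_X hy, ← map_one (PowerSeries.C (R := ℝ)), PowerSeries.subst_C]
    simp [y]
  refine ⟨√c • S, ?_⟩
  rw [smul_mul_smul_comm, hS, smul_smul, ← sq, Real.sq_sqrt hF.le, mul_inv_cancel₀ hF.ne',
    one_smul]

theorem MvPolynomial.coe_sum {ι σ R : Type*} [CommSemiring R] (s : Finset ι)
    (q : ι → MvPolynomial σ R) :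
    ((∑ i ∈ s, q i : MvPolynomial σ R) : MvPowerSeries σ R) = ∑ i ∈ s, (q i : MvPowerSeries σ R) :=
  map_sum MvPolynomial.coeToMvPowerSeries.ringHom q s

theorem MemRint.exists_eq_smul_add_smul {V : Type*} [AddCommGroup V] [Module ℝ V] {C : Set V}
    {x y : V} (hx : MemRint C x) (hy : y ∈ C) :
    ∃ z ∈ C, ∃ c > (0 : ℝ), ∃ ε > (0 : ℝ), x = c • z + ε • y := by
  obtain ⟨μ, hμ, hz⟩ := hx.2 y hy
  refine ⟨_, hz, μ⁻¹, by positivity, (μ - 1) / μ, div_pos (by linarith) (by positivity), ?_⟩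
  have : μ ≠ 0 := by positivity
  match_scalars
  · field_simp
  · field_simp
    ring

theorem IsFaceOf.convex {n : ℕ} {P F : Set (Fin n → ℝ)} (hF : IsFaceOf P F) (hP : Convex ℝ P) :
    Convex ℝ F := by
  obtain ⟨-, A, c, -, -, rfl⟩ := hF
  refine hP.inter (convex_hyperplane ⟨fun x y => ?_, fun r x => ?_⟩ c)
  · simp [mul_add, Finset.sum_add_distrib]
  · simp [Finset.mul_sum, mul_left_comm]

theorem sum_smul_of_eq_ite_add {ι M : Type*} [Fintype ι] [DecidableEq ι] [AddCommMonoid M]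
    [Module ℝ M] {w w' : ι → ℝ} {i₀ : ι} {c : ℝ}
    (hw : ∀ i, w i = (if i = i₀ then c else 0) + w' i) (x : ι → M) :
    ∑ i, w i • x i = c • x i₀ + ∑ i, w' i • x i := by
  simp only [hw, add_smul, ite_smul, zero_smul, Finset.sum_add_distrib, Finset.sum_ite_eq',
    Finset.mem_univ, if_true]

def dyadicWeight {N : ℕ} (δ : Fin N → Bool) : ℝ :=
  ∑ k, if δ k then ((2 : ℝ) ^ (k.1 + 1))⁻¹ else 0

theorem dyadicWeight_nonneg {N : ℕ} (δ : Fin N → Bool) : 0 ≤ dyadicWeight δ :=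
  Finset.sum_nonneg fun _ _ => by positivity

theorem dyadicWeight_succ {N : ℕ} (δ : Fin (N + 1) → Bool) :
    dyadicWeight δ = (if δ 0 then 1 / 2 else 0) + dyadicWeight (Fin.tail δ) / 2 := by
  rw [dyadicWeight, Fin.sum_univ_succ, dyadicWeight, Finset.sum_div]
  congr 1
  · norm_num
  · refine Finset.sum_congr rfl fun k _ => ?_
    by_cases h : δ k.succ <;> simp [h, Fin.tail, pow_succ]; ring

theorem dyadicWeight_first_digit {t N : ℕ} (δ : Fin t → Fin (N + 1) → Bool)
    (hfull : ∀ k, ∃ s, δ s k = true) (hsum : ∑ s, dyadicWeight (δ s) = 1) :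
    (∃ s₀, (∀ s, dyadicWeight (δ s) =
        (if s = s₀ then 1 / 2 else 0) + dyadicWeight (Fin.tail (δ s)) / 2) ∧
      ∑ s, dyadicWeight (Fin.tail (δ s)) = 1) ∨
    ∃ s₁ s₂, ∀ s, dyadicWeight (δ s) =
      (if s = s₁ then 1 / 2 else 0) + (if s = s₂ then 1 / 2 else 0) := by
  set S := Finset.univ.filter fun s => δ s 0 = true
  have hw : ∀ s, dyadicWeight (δ s) =
      (if s ∈ S then 1 / 2 else 0) + dyadicWeight (Fin.tail (δ s)) / 2 := fun s => by
    simp [S, dyadicWeight_succ (δ s)]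
  have hcard : (S.card : ℝ) / 2 + (∑ s, dyadicWeight (Fin.tail (δ s))) / 2 = 1 := by
    rw [← hsum, Finset.sum_congr rfl fun s _ => hw s, Finset.sum_add_distrib, ← Finset.sum_div,
      Finset.sum_ite_mem, Finset.univ_inter]
    simp [div_eq_mul_inv]
  have htail : 0 ≤ ∑ s, dyadicWeight (Fin.tail (δ s)) :=
    Finset.sum_nonneg fun s _ => dyadicWeight_nonneg _
  have hS : 0 < S.card := by
    obtain ⟨s, hs⟩ := hfull 0
    exact Finset.card_pos.mpr ⟨s, by simp [S, hs]⟩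
  have hS_le : S.card ≤ 2 := by exact_mod_cast (by linarith : (S.card : ℝ) ≤ 2)
  obtain hS1 | hS2 : S.card = 1 ∨ S.card = 2 := by omega
  · obtain ⟨s₀, hs₀⟩ := Finset.card_eq_one.mp hS1
    refine Or.inl ⟨s₀, fun s => by simpa [hs₀] using hw s, ?_⟩
    rw [hS1] at hcard
    linarith
  · obtain ⟨s₁, s₂, h12, hs₁₂⟩ := Finset.card_eq_two.mp hS2
    rw [hS2] at hcard
    have hzero := (Finset.sum_eq_zero_iff_of_nonneg fun s _ =>
      dyadicWeight_nonneg (Fin.tail (δ s))).mp (by push_cast at hcard; linarith)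
    refine Or.inr ⟨s₁, s₂, fun s => ?_⟩
    rw [hw s, hzero s (Finset.mem_univ s), hs₁₂]
    by_cases h1 : s = s₁ <;> by_cases h2 : s = s₂ <;> simp_all

section PowerSeries

variable {σ : Type*}

theorem MvPowerSeries.monomial_add_one (m n : σ →₀ ℕ) :
    MvPowerSeries.monomial (m + n) (1 : ℝ) =
      MvPowerSeries.monomial m 1 * MvPowerSeries.monomial n 1 := by
  rw [MvPowerSeries.monomial_mul_monomial, one_mul]

theorem isSumSq_smul_monomial_add_smul_monomial {a : ℝ} (ha : 0 < a) (c : ℝ) (b : σ →₀ ℕ)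
    {τ : σ →₀ ℕ} (hτ : τ ≠ 0) :
    IsSumSq (a • MvPowerSeries.monomial (b + b) (1 : ℝ) +
      c • MvPowerSeries.monomial (b + b + τ) (1 : ℝ)) := by
  have hconst : MvPowerSeries.constantCoeff (MvPowerSeries.monomial τ (1 : ℝ)) = 0 := by
    rw [← MvPowerSeries.coeff_zero_eq_constantCoeff_apply, MvPowerSeries.coeff_monomial,
      if_neg hτ.symm]
  obtain ⟨G, hG⟩ : IsSquare (a • (1 : MvPowerSeries σ ℝ) + c • MvPowerSeries.monomial τ 1) :=
    MvPowerSeries.isSquare_of_constantCoeff_pos (by simp [hconst, ha])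
  have : a • MvPowerSeries.monomial (b + b) (1 : ℝ) + c • MvPowerSeries.monomial (b + b + τ) 1 =
      (MvPowerSeries.monomial b 1 * G) * (MvPowerSeries.monomial b 1 * G) := by
    rw [mul_mul_mul_comm, ← hG, MvPowerSeries.monomial_mul_monomial, one_mul, mul_add,
      mul_smul_comm, mul_smul_comm, mul_one, MvPowerSeries.monomial_mul_monomial, one_mul]
  rw [this]
  exact IsSumSq.mul_self _

theorem isSumSq_smul_monomial_add_add_smul_monomial {ε : ℝ} (hε : 0 < ε) (e : ℝ)
    {β α : σ →₀ ℕ} (hβα : β ≤ α) {r : MvPowerSeries σ ℝ}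
    (h : IsSumSq (r + (-(e ^ 2 / (4 * ε))) • MvPowerSeries.monomial (α - β + (α - β)) 1)) :
    IsSumSq (ε • MvPowerSeries.monomial (β + β) (1 : ℝ) + r +
      e • MvPowerSeries.monomial α (1 : ℝ)) := by
  obtain ⟨ρ, rfl⟩ := exists_add_of_le hβα
  rw [add_tsub_cancel_left] at h
  rw [add_right_comm, MvPowerSeries.monomial_add_one, MvPowerSeries.monomial_add_one β]
  refine IsSumSq.smul_mul_self_add hε e _ _ ?_
  rwa [← MvPowerSeries.monomial_add_one, sub_eq_add_neg, ← neg_smul]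

theorem isSumSq_two_monomials_add_smul_monomial {ε : ℝ} (hε : 0 < ε) (e : ℝ)
    {b₁ b₂ τ α : σ →₀ ℕ} (hτ : τ ≠ 0) (hα : α + α = b₁ + b₁ + (b₂ + b₂) + τ) :
    IsSumSq (ε • MvPowerSeries.monomial (b₁ + b₁) (1 : ℝ) +
      ε • MvPowerSeries.monomial (b₂ + b₂) (1 : ℝ) + e • MvPowerSeries.monomial α (1 : ℝ)) := by
  have hα' := fun i => congrArg (· i) hα
  simp only [Finsupp.add_apply] at hα'
  have hle : b₁ ≤ α := Finsupp.le_def.mpr fun i => by have := hα' i; omega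
  refine isSumSq_smul_monomial_add_add_smul_monomial hε e hle ?_
  have hρ : α - b₁ + (α - b₁) = b₂ + b₂ + τ := by
    ext i
    have := hα' i
    simp only [Finsupp.add_apply, Finsupp.tsub_apply]
    omega
  rw [hρ]
  exact isSumSq_smul_monomial_add_smul_monomial hε _ b₂ hτ

theorem le_and_tsub_add_tsub_eq_weighted_sum {ι : Type*} [Fintype ι] [DecidableEq ι]
    {w w' : ι → ℝ} {s₀ : ι} (hw : ∀ s, w s = (if s = s₀ then 1 / 2 else 0) + w' s / 2)
    (hw' : ∀ s, 0 ≤ w' s) (hsum' : ∑ s, w' s = 1) {b d : ι → σ →₀ ℕ} {α : σ →₀ ℕ}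
    (hα : ∀ i, (α i : ℝ) = ∑ s, w s * ((b s + b s + d s) i : ℝ)) :
    b s₀ ≤ α ∧ ∀ i, ((α - b s₀ + (α - b s₀)) i : ℝ) =
      ∑ s, w' s * ((b s + b s + (d s + d s₀)) i : ℝ) := by
  have hα2 : ∀ i, 2 * (α i : ℝ) = ((b s₀ + b s₀ + d s₀) i : ℝ) +
      ∑ s, w' s * ((b s + b s + d s) i : ℝ) := fun i => by
    have h := sum_smul_of_eq_ite_add hw fun s => ((b s + b s + d s) i : ℝ)
    simp only [smul_eq_mul, div_mul_eq_mul_div, ← Finset.sum_div] at h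
    rw [hα i, h]
    ring
  have hle : b s₀ ≤ α := Finsupp.le_def.mpr fun i => by
    have hnn : 0 ≤ ∑ s, w' s * ((b s + b s + d s) i : ℝ) :=
      Finset.sum_nonneg fun s _ => mul_nonneg (hw' s) (Nat.cast_nonneg _)
    have : ((b s₀ + b s₀ + d s₀) i : ℝ) ≤ 2 * α i := by linarith [hα2 i]
    have : (b s₀ + b s₀ + d s₀) i ≤ 2 * α i := by exact_mod_cast this
    simp only [Finsupp.add_apply] at this
    omega
  refine ⟨hle, fun i => ?_⟩
  have hαi : (α i : ℝ) = b s₀ i + (α - b s₀) i := by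
    rw [← Nat.cast_add, ← Finsupp.add_apply, add_tsub_cancel_of_le hle]
  have h2 := hα2 i
  simp only [Finsupp.add_apply, Nat.cast_add, mul_add, Finset.sum_add_distrib,
    ← Finset.sum_mul, hsum'] at h2 ⊢
  linarith

theorem isSumSq_smul_sum_dyadicWeight_add (N : ℕ) {t : ℕ} (δ : Fin t → Fin N → Bool)
    (b d : Fin t → σ →₀ ℕ) (α : σ →₀ ℕ) {ε : ℝ} (hε : 0 < ε) (e : ℝ)
    (hfull : ∀ k, ∃ s, δ s k = true) (hsum : ∑ s, dyadicWeight (δ s) = 1)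
    (hα : ∀ i, (α i : ℝ) = ∑ s, dyadicWeight (δ s) * ((b s + b s + d s) i : ℝ))
    (hd : ∃ s, dyadicWeight (δ s) ≠ 0 ∧ d s ≠ 0) :
    IsSumSq (∑ s, (ε * dyadicWeight (δ s)) • MvPowerSeries.monomial (b s + b s) (1 : ℝ) +
      e • MvPowerSeries.monomial α (1 : ℝ)) := by
  induction N generalizing d α ε e with
  | zero => simp [dyadicWeight] at hsum
  | succ N ih =>
    rcases dyadicWeight_first_digit δ hfull hsum with ⟨s₀, hw, hsum'⟩ | ⟨s₁, s₂, hw⟩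
    · obtain ⟨hle, hα'⟩ := le_and_tsub_add_tsub_eq_weighted_sum hw
        (fun s => dyadicWeight_nonneg _) hsum' hα
      have hsplit : ∑ s, (ε * dyadicWeight (δ s)) • MvPowerSeries.monomial (b s + b s) (1 : ℝ) =
          (ε / 2) • MvPowerSeries.monomial (b s₀ + b s₀) 1 +
            ∑ s, (ε / 2 * dyadicWeight (Fin.tail (δ s))) •
              MvPowerSeries.monomial (b s + b s) (1 : ℝ) :=
        sum_smul_of_eq_ite_add (fun s => by rw [hw s]; split_ifs <;> ring) _
      rw [hsplit]
      refine isSumSq_smul_monomial_add_add_smul_monomial (half_pos hε) e hle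
        (ih _ (fun s => d s + d s₀) _ (half_pos hε) _ (fun k => hfull k.succ) hsum' hα' ?_)
      obtain ⟨s, hws, hds⟩ := hd
      by_cases hs : s = s₀
      · obtain ⟨s', -, hs'⟩ := Finset.exists_ne_zero_of_sum_ne_zero (hsum' ▸ one_ne_zero)
        exact ⟨s', hs', by simp [hs ▸ hds]⟩
      · refine ⟨s, fun h => hws ?_, by simp [hds]⟩
        simp [hw s, hs, show dyadicWeight (Fin.tail (δ s)) = 0 from h]
    · have hsplit : ∑ s, (ε * dyadicWeight (δ s)) • MvPowerSeries.monomial (b s + b s) (1 : ℝ) =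
          (ε / 2) • MvPowerSeries.monomial (b s₁ + b s₁) 1 +
            (ε / 2) • MvPowerSeries.monomial (b s₂ + b s₂) (1 : ℝ) := by
        simp only [hw, mul_add, add_smul, mul_ite, mul_zero, ite_smul, zero_smul,
          Finset.sum_add_distrib, Finset.sum_ite_eq', Finset.mem_univ, if_true]
        ring_nf
      rw [hsplit]
      refine isSumSq_two_monomials_add_smul_monomial (half_pos hε) e (τ := d s₁ + d s₂) ?_ ?_
      · obtain ⟨s, hws, hds⟩ := hd
        simp only [hw s] at hws
        by_cases h1 : s = s₁
        · simp [← h1, hds]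
        · by_cases h2 : s = s₂
          · simp [← h2, hds]
          · simp [h1, h2] at hws
      · refine Finsupp.ext fun i => ?_
        have h := hα i
        simp only [hw, add_mul, ite_mul, zero_mul, Finset.sum_add_distrib, Finset.sum_ite_eq',
          Finset.mem_univ, if_true, Finsupp.add_apply, Nat.cast_add] at h
        simp only [Finsupp.add_apply]
        exact_mod_cast (by linarith : (α i + α i : ℝ) =
          b s₁ i + b s₁ i + (b s₂ i + b s₂ i) + (d s₁ i + d s₂ i))

end PowerSeries

section FacePart

variable {n : ℕ}

theorem expPt_add (a b : Fin n →₀ ℕ) : expPt (a + b) = expPt a + expPt b :=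
  funext fun i => by simp [expPt]

theorem expPt_mem_of_mem_support_facePart {f : MvPolynomial (Fin n) ℝ} {γ : Set (Fin n → ℝ)}
    {β : Fin n →₀ ℕ} (hβ : β ∈ (facePart f γ).support) : expPt β ∈ γ := by
  by_contra h
  simp [facePart, MvPolynomial.coeff_sum, MvPolynomial.coeff_monomial, h] at hβ

theorem isSumSq_coe_of_mem_sosHalfSupported {γ : Set (Fin n → ℝ)} {p : MvPolynomial (Fin n) ℝ}
    (hp : p ∈ sosHalfSupported γ) : IsSumSq (p : MvPowerSeries (Fin n) ℝ) := by
  obtain ⟨l, -, rfl⟩ := hp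
  exact (IsSumSq.multiset_sum_map_sq l).map MvPolynomial.coeToMvPowerSeries.ringHom

theorem sum_smul_monomial_add_self_mem_sosHalfSupported {γ : Set (Fin n → ℝ)} {t : ℕ}
    {w : Fin t → ℝ} (hw : ∀ s, 0 ≤ w s) {b : Fin t → Fin n →₀ ℕ}
    (hb : ∀ s, expPt (b s + b s) ∈ γ) :
    ∑ s, w s • monomial (b s + b s) (1 : ℝ) ∈ sosHalfSupported γ := by
  refine ⟨Finset.univ.val.map fun s => √(w s) • monomial (b s) (1 : ℝ), ?_, ?_⟩
  · simp only [Multiset.mem_map, Finset.mem_val, Finset.mem_univ, true_and]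
    rintro _ ⟨s, rfl⟩ β hβ
    have := MvPolynomial.support_smul hβ
    rw [MvPolynomial.support_monomial, if_neg one_ne_zero, Finset.mem_singleton] at this
    rw [this, two_smul, ← expPt_add]
    exact hb s
  · rw [Finset.sum_eq_multiset_sum, Multiset.map_map]
    refine congrArg _ (Multiset.map_congr rfl fun s _ => ?_)
    simp [smul_pow, MvPolynomial.monomial_pow, Real.sq_sqrt (hw s), two_nsmul]

theorem MemBconv.exists_halves {g : MvPolynomial (Fin n) ℝ} {α : Fin n →₀ ℕ}
    (h : MemBconv (DeltaESet g) α) :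
    ∃ (t N : ℕ) (δ : Fin t → Fin N → Bool) (b d : Fin t → Fin n →₀ ℕ),
      (∀ k, ∃ s, δ s k = true) ∧ ∑ s, dyadicWeight (δ s) = 1 ∧
      (∀ i, (α i : ℝ) = ∑ s, dyadicWeight (δ s) * ((b s + b s + d s) i : ℝ)) ∧
      ∀ s, b s + b s ∈ g.support := by
  obtain ⟨t, N, A, δ, -, hA, -, hsum, hfull, hα⟩ := h
  choose B hB hBeven hBA using fun s => (hA s).1
  have hcast : ∀ s, dyadicWeight (δ s) =
      ((∑ k : Fin N, if δ s k then ((2 : ℚ) ^ (k.1 + 1))⁻¹ else 0 : ℚ) : ℝ) := fun s => by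
    simp [dyadicWeight, apply_ite (Rat.cast : ℚ → ℝ)]
  have hhalf : ∀ s, (B s).mapRange (· / 2) (by simp) + (B s).mapRange (· / 2) (by simp) = B s :=
    fun s => Finsupp.ext fun i => by
      obtain ⟨k, hk⟩ := hBeven s i
      simp only [Finsupp.add_apply, Finsupp.mapRange_apply]
      omega
  have hBA' : ∀ s, B s ≤ A s := fun s => Finsupp.le_def.mpr fun i => by
    have : (B s i : ℝ) ≤ A s i := hBA s i
    exact_mod_cast this
  refine ⟨t, N, δ, fun s => (B s).mapRange (· / 2) (by simp), fun s => A s - B s, hfull,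
    ?_, fun i => ?_, fun s => (hhalf s).symm ▸ hB s⟩
  · simp only [hcast]
    exact_mod_cast hsum
  · simp only [hhalf, add_tsub_cancel_of_le (hBA' _), hcast]
    exact_mod_cast hα i

theorem exists_ne_zero_and_ne_zero_of_expPt_notMem {γ : Set (Fin n → ℝ)} (hγ : Convex ℝ γ)
    {t : ℕ} {w : Fin t → ℝ} (hw : ∀ s, 0 ≤ w s) (hsum : ∑ s, w s = 1)
    {b d : Fin t → Fin n →₀ ℕ} (hb : ∀ s, expPt (b s + b s) ∈ γ) {α : Fin n →₀ ℕ}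
    (hα : ∀ i, (α i : ℝ) = ∑ s, w s * ((b s + b s + d s) i : ℝ)) (hαγ : expPt α ∉ γ) :
    ∃ s, w s ≠ 0 ∧ d s ≠ 0 := by
  by_contra! h
  refine hαγ ?_
  have : expPt α = ∑ s, w s • expPt (b s + b s) := funext fun i => by
    simp only [expPt, hα i, Finset.sum_apply, Pi.smul_apply, smul_eq_mul]
    refine Finset.sum_congr rfl fun s _ => ?_
    by_cases hs : w s = 0
    · simp [hs]
    · simp [h s hs]
  exact this ▸ hγ.sum_mem (fun s _ => hw s) hsum fun s _ => hb s

end FacePart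

theorem facePart_pm_monomial_sos_general {n : ℕ} (f : MvPolynomial (Fin n) ℝ)
    (γ : Set (Fin n → ℝ)) (hγ : IsCompactFaceOf (NewtonPolyhedron f) γ)
    (hrint : MemRint (sosHalfSupported γ) (facePart f γ)) :
    ∀ a : ℝ, 0 < a → ∀ α : Fin n →₀ ℕ,
      MemBconv (DeltaESet (facePart f γ)) α → expPt α ∉ γ →
      IsSumSq ((↑(facePart f γ + a • monomial α (1 : ℝ)) : MvPowerSeries (Fin n) ℝ)) ∧
      IsSumSq ((↑(facePart f γ - a • monomial α (1 : ℝ)) : MvPowerSeries (Fin n) ℝ)) := by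
  intro a _ α hα hαγ
  obtain ⟨t, N, δ, b, d, hfull, hsum, hαeq, hb⟩ := hα.exists_halves
  have hbγ : ∀ s, expPt (b s + b s) ∈ γ := fun s => expPt_mem_of_mem_support_facePart (hb s)
  have hd := exists_ne_zero_and_ne_zero_of_expPt_notMem (hγ.1.convex (convex_convexHull ℝ _))
    (fun s => dyadicWeight_nonneg (δ s)) hsum hbγ hαeq hαγ
  obtain ⟨z, hz, c, hc, ε, hε, hfz⟩ := hrint.exists_eq_smul_add_smul
    (sum_smul_monomial_add_self_mem_sosHalfSupported (fun s => dyadicWeight_nonneg (δ s)) hbγ)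
  have key : ∀ e : ℝ,
      IsSumSq ((↑(facePart f γ + e • monomial α (1 : ℝ)) : MvPowerSeries (Fin n) ℝ)) := by
    intro e
    have hcoe : ((facePart f γ + e • monomial α (1 : ℝ) : MvPolynomial (Fin n) ℝ) :
        MvPowerSeries (Fin n) ℝ) = c • (z : MvPowerSeries (Fin n) ℝ) +
          (∑ s, (ε * dyadicWeight (δ s)) • MvPowerSeries.monomial (b s + b s) (1 : ℝ) +
            e • MvPowerSeries.monomial α (1 : ℝ)) := by
      simp [hfz, MvPolynomial.coe_sum, Finset.smul_sum, smul_smul, add_assoc]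
    rw [hcoe]
    exact ((isSumSq_coe_of_mem_sosHalfSupported hz).smul_of_nonneg hc.le).add
      (isSumSq_smul_sum_dyadicWeight_add N δ b d α hε e hfull hsum hαeq hd)
  refine ⟨key a, ?_⟩
  rw [sub_eq_add_neg, ← neg_smul]
  exact key (-a)

/-- Let `f(0) = 0`, let `γ` be a (compact) face of the Newton diagram of `f` and suppose `f_γ`
lies in the relative interior of the cone of sums of squares supported in `(1/2)γ`. Then for
every `a > 0` and every `α ∈ bconv Δ_E(f_γ) \\ γ`, both `f_γ + a x^α` and `f_γ - a x^α` are
sums of squares of formal power series. -/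
theorem facePart_pm_monomial_sos {n : ℕ} (f : MvPolynomial (Fin n) ℝ)
    (hf0 : MvPolynomial.eval (0 : Fin n → ℝ) f = 0)
    (γ : Set (Fin n → ℝ)) (hγ : IsCompactFaceOf (NewtonPolyhedron f) γ)
    (hrint : MemRint (sosHalfSupported γ) (facePart f γ)) :
    ∀ a : ℝ, 0 < a → ∀ α : Fin n →₀ ℕ,
      MemBconv (DeltaESet (facePart f γ)) α → expPt α ∉ γ →
      IsSumSq ((↑(facePart f γ + a • monomial α (1 : ℝ)) : MvPowerSeries (Fin n) ℝ)) ∧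
      IsSumSq ((↑(facePart f γ - a • monomial α (1 : ℝ)) : MvPowerSeries (Fin n) ℝ)) :=
  facePart_pm_monomial_sos_general f γ hγ hrint
end
end

section
/- Let f ∈ R[x_1,...,x_n] have Newton diagram Γ(f) contained in the hyperplane {α : k·α_1 + ... + k·α_{n-1} + α_n = 2k} for some positive integer k, with Γ(f) equal to the full set of nonnegative integer points of this hyperplane intersected with the Newton polyhedron structure. If f_Γ lies in the relative interior of the SOS cone of polynomials supported in (1/2)Γ, then f has a regular Newton polyhedron. -/
/-!
Write `ℓ x = k (x₀ + ⋯ + xₙ₋₁) + xₙ`, so that `Γ = {x ≥ 0 | ℓ x = 2k}` is a simplex with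
vertices `Vⱼ = hⱼ + hⱼ`, where `hⱼ = eⱼ` for `j < n` and `hₙ = k eₙ`. The only way to write `Vⱼ` as a sum of two points of `½Γ` is `hⱼ + hⱼ`,
so every sum of squares supported in `½Γ` has a nonnegative coefficient at `Vⱼ`. Prolonging the
segment from `(x^hⱼ)²` through `f_Γ` inside that cone then forces the coefficient of `f_Γ`, hence
of `f`, at `Vⱼ` to be positive. The face of the Newton polyhedron on which `ℓ` is minimal is
compact, hence lies in `Γ`; so `ℓ ≥ 2k` on the support of `f`, the Newton polyhedron is
`{x ≥ 0 | ℓ x ≥ 2k}` with vertices the `Vⱼ`, and `Γ` is its only maximal compact face. Finally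
every exponent `α` with `ℓ α ≥ 2k` dominates some `hⱼ₁ + hⱼ₂`, so `α` is the midpoint of the even
points `2 (α - hⱼ₂) ≥ Vⱼ₁` and `Vⱼ₂` of `Δ_E(f_Γ)`.
-/

open MvPolynomial

noncomputable section
attribute [local instance] Classical.propDecidable

section ConvexGeometry

variable {E : Type*} [AddCommGroup E] [Module ℝ E]

theorem mem_of_mem_extremePoints_of_mem_convexHull {A S : Set E} {x : E} (hA : Convex ℝ A)
    (hSA : S ⊆ A) (hx : x ∈ A.extremePoints ℝ) (hxS : x ∈ convexHull ℝ S) : x ∈ S :=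
  extremePoints_convexHull_subset <|
    inter_extremePoints_subset_extremePoints_of_subset (convexHull_min hSA hA) ⟨hxS, hx⟩

theorem convexHull_inter_level {D : Set E} {ℓ : E →ₗ[ℝ] ℝ} {c : ℝ} (hD : ∀ y ∈ D, c ≤ ℓ y) :
    convexHull ℝ D ∩ {y | ℓ y = c} = convexHull ℝ (D ∩ {y | ℓ y = c}) := by
  refine subset_antisymm ?_ ?_
  · rintro x ⟨hx, hxc⟩
    -- `K` is convex because a convex combination can only reach the level `c` from points on it.
    set K := {y | c ≤ ℓ y ∧ (ℓ y = c → y ∈ convexHull ℝ (D ∩ {y | ℓ y = c}))}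
    have hK : Convex ℝ K := by
      rintro y₁ ⟨hc₁, h₁⟩ y₂ ⟨hc₂, h₂⟩ a b ha hb hab
      have hℓ : ℓ (a • y₁ + b • y₂) - c = a * (ℓ y₁ - c) + b * (ℓ y₂ - c) := by
        simp only [map_add, map_smul, smul_eq_mul]
        linear_combination c * hab
      have t₁ := mul_nonneg ha (sub_nonneg.2 hc₁)
      have t₂ := mul_nonneg hb (sub_nonneg.2 hc₂)
      refine ⟨by linarith, fun he => ?_⟩
      rcases ha.eq_or_lt with rfl | ha'
      · obtain rfl : b = 1 := by linarith
        simp only [zero_smul, one_smul, zero_add] at he ⊢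
        exact h₂ he
      rcases hb.eq_or_lt with rfl | hb'
      · obtain rfl : a = 1 := by linarith
        simp only [zero_smul, one_smul, add_zero] at he ⊢
        exact h₁ he
      have e₁ : ℓ y₁ = c := by
        by_contra h
        linarith [mul_pos ha' (sub_pos.2 (hc₁.lt_of_ne' h))]
      have e₂ : ℓ y₂ = c := by
        by_contra h
        linarith [mul_pos hb' (sub_pos.2 (hc₂.lt_of_ne' h))]
      exact convex_convexHull ℝ _ (h₁ e₁) (h₂ e₂) ha hb hab
    have hDK : D ⊆ K := fun y hy => ⟨hD y hy, fun h => subset_convexHull ℝ _ ⟨hy, h⟩⟩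
    exact (convexHull_min hDK hK hx).2 hxc
  · exact convexHull_min (Set.inter_subset_inter_left _ (subset_convexHull ℝ D))
      ((convex_convexHull ℝ D).inter (convex_hyperplane ℓ.isLinear c))

end ConvexGeometry

section WeightedOrthant

variable {ι : Type*} [Fintype ι]

def weightLevel (w : ι → ℝ) (c : ℝ) : Set (ι → ℝ) := {x | 0 ≤ x ∧ w ⬝ᵥ x = c}

def weightSuperlevel (w : ι → ℝ) (c : ℝ) : Set (ι → ℝ) := {x | 0 ≤ x ∧ c ≤ w ⬝ᵥ x}

theorem weightLevel_subset_weightSuperlevel (w : ι → ℝ) (c : ℝ) :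
    weightLevel w c ⊆ weightSuperlevel w c :=
  fun _ hx => ⟨hx.1, hx.2.ge⟩

theorem convex_weightSuperlevel (w : ι → ℝ) (c : ℝ) : Convex ℝ (weightSuperlevel w c) :=
  (convex_Ici 0).inter (convex_halfSpace_ge (dotProductBilin ℝ ℝ w).isLinear c)

theorem dotProduct_eq_of_mem_extremePoints {w x : ι → ℝ} {c : ℝ} (hc : 0 < c)
    (hx : x ∈ (weightSuperlevel w c).extremePoints ℝ) : w ⬝ᵥ x = c := by
  obtain ⟨⟨hx0, hxc⟩, hext⟩ := hx
  have ht : 0 < w ⬝ᵥ x := hc.trans_le hxc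
  have hx_ne : x ≠ 0 := by rintro rfl; simp at ht
  set r := c / w ⬝ᵥ x
  have hr : r ≤ 1 := (div_le_one ht).2 hxc
  -- `x` is the midpoint of its rescalings by `r` and `2 - r`, which both lie in the set.
  have h₁ : r • x ∈ weightSuperlevel w c := by
    refine ⟨smul_nonneg (by positivity) hx0, ?_⟩
    rw [dotProduct_smul, smul_eq_mul, div_mul_cancel₀ _ ht.ne']
  have h₂ : (2 - r) • x ∈ weightSuperlevel w c := by
    refine ⟨smul_nonneg (by linarith) hx0, ?_⟩
    rw [dotProduct_smul, smul_eq_mul, sub_mul, div_mul_cancel₀ _ ht.ne']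
    linarith
  have hseg : x ∈ openSegment ℝ (r • x) ((2 - r) • x) :=
    ⟨1 / 2, 1 / 2, by norm_num, by norm_num, by norm_num, by module⟩
  have hr1 : r = 1 :=
    smul_left_injective ℝ hx_ne ((hext h₁ h₂ hseg).trans (one_smul ℝ x).symm)
  exact ((div_eq_one_iff_eq ht.ne').1 hr1).symm

variable [DecidableEq ι]

theorem single_div_mem_weightLevel {w : ι → ℝ} {c : ℝ} {i : ι} (hw : 0 < w i) (hc : 0 ≤ c) :
    Pi.single i (c / w i) ∈ weightLevel w c :=
  ⟨Pi.single_nonneg.2 (div_nonneg hc hw.le), by rw [dotProduct_single, mul_div_cancel₀ _ hw.ne']⟩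

theorem mem_convexHull_range_single {w x : ι → ℝ} (hw : ∀ i, 0 < w i) (hx : 0 ≤ x)
    (ht : 0 < w ⬝ᵥ x) :
    x ∈ convexHull ℝ (Set.range fun i => Pi.single i (w ⬝ᵥ x / w i)) := by
  set t := w ⬝ᵥ x
  have hx_eq : x = ∑ i, (w i * x i / t) • Pi.single i (t / w i) := by
    conv_lhs => rw [← Finset.univ_sum_single x]
    refine Finset.sum_congr rfl fun i _ => ?_
    rw [← Pi.single_smul', smul_eq_mul]
    congr 1
    field_simp [(hw i).ne']
  rw [hx_eq]
  refine (convex_convexHull ℝ _).sum_mem (fun i _ => ?_) ?_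
    (fun i _ => subset_convexHull ℝ _ ⟨i, rfl⟩)
  · exact div_nonneg (mul_nonneg (hw i).le (hx i)) ht.le
  · rw [← Finset.sum_div]
    exact div_self ht.ne'

theorem exists_eq_single_of_mem_extremePoints {w x : ι → ℝ} {c : ℝ} (hw : ∀ i, 0 < w i)
    (hc : 0 < c) (hx : x ∈ (weightSuperlevel w c).extremePoints ℝ) :
    ∃ i, x = Pi.single i (c / w i) := by
  have ht := dotProduct_eq_of_mem_extremePoints hc hx
  have hmem := mem_convexHull_range_single hw hx.1.1 (ht ▸ hc)
  rw [ht] at hmem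
  have hvert : (Set.range fun i => Pi.single i (c / w i)) ⊆ weightSuperlevel w c := by
    rintro _ ⟨i, rfl⟩
    exact weightLevel_subset_weightSuperlevel w c (single_div_mem_weightLevel (hw i) hc.le)
  obtain ⟨i, hi⟩ :=
    mem_of_mem_extremePoints_of_mem_convexHull (convex_weightSuperlevel w c) hvert hx hmem
  exact ⟨i, hi.symm⟩

end WeightedOrthant

section Exponents

variable {m : ℕ}

theorem expPt_nonneg (α : Fin m →₀ ℕ) : 0 ≤ expPt α := fun _ => Nat.cast_nonneg _

theorem expPt_injective : Function.Injective (expPt (n := m)) :=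
  fun _ _ h => Finsupp.ext fun i => Nat.cast_injective (congr_fun h i)

theorem expPt_nsmul (c : ℕ) (α : Fin m →₀ ℕ) : expPt (c • α) = (c : ℝ) • expPt α := by
  funext i
  simp [expPt]

theorem expPt_single (j : Fin m) (v : ℕ) :
    expPt (Finsupp.single j v) = Pi.single j (v : ℝ) := by
  funext i
  rcases eq_or_ne i j with rfl | hij
  · simp [expPt]
  · simp [expPt, hij]

theorem cast_weight_eq_dotProduct (w : Fin m → ℕ) (α : Fin m →₀ ℕ) :
    (Finsupp.weight w α : ℝ) = (fun i => (w i : ℝ)) ⬝ᵥ expPt α := by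
  simp [Finsupp.weight_eq_sum, dotProduct, expPt, mul_comm]

end Exponents

section NewtonPolyhedron

variable {m : ℕ} {f : MvPolynomial (Fin m) ℝ} {w : Fin m → ℝ} {c : ℝ}

theorem expPt_mem_deltaSet {α : Fin m →₀ ℕ} (h : α ∈ f.support) : expPt α ∈ DeltaSet f :=
  ⟨α, h, fun _ => le_rfl⟩

theorem mem_deltaSet_of_le {x y : Fin m → ℝ} (hx : x ∈ DeltaSet f) (hxy : x ≤ y) :
    y ∈ DeltaSet f :=
  let ⟨α, hα, hle⟩ := hx
  ⟨α, hα, fun i => (hle i).trans (hxy i)⟩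

theorem deltaSet_subset_weightSuperlevel (hw : 0 ≤ w)
    (h : ∀ β ∈ f.support, c ≤ w ⬝ᵥ expPt β) : DeltaSet f ⊆ weightSuperlevel w c := by
  rintro x ⟨β, hβ, hle⟩
  exact ⟨(expPt_nonneg β).trans hle,
    (h β hβ).trans (dotProduct_le_dotProduct_of_nonneg_left hle hw)⟩

theorem newtonPolyhedron_subset_weightSuperlevel (hw : 0 ≤ w)
    (h : ∀ β ∈ f.support, c ≤ w ⬝ᵥ expPt β) : NewtonPolyhedron f ⊆ weightSuperlevel w c :=
  convexHull_min (deltaSet_subset_weightSuperlevel hw h) (convex_weightSuperlevel w c)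

theorem weightSuperlevel_subset_newtonPolyhedron (hw : ∀ i, 0 < w i) (hc : 0 < c)
    (hV : ∀ i, Pi.single i (c / w i) ∈ DeltaSet f) :
    weightSuperlevel w c ⊆ NewtonPolyhedron f := by
  rintro x ⟨hx0, hxc⟩
  refine convexHull_mono ?_ (mem_convexHull_range_single hw hx0 (hc.trans_le hxc))
  rintro _ ⟨i, rfl⟩
  exact mem_deltaSet_of_le (hV i)
    (Pi.single_le_single.2 (div_le_div_of_nonneg_right hxc (hw i).le))

theorem newtonDiagram_subset_newtonPolyhedron : NewtonDiagram f ⊆ NewtonPolyhedron f := by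
  simp only [NewtonDiagram, Set.iUnion₂_subset_iff]
  rintro F ⟨⟨-, A, c, -, -, rfl⟩, -⟩
  exact Set.sep_subset _ _

theorem IsCompactFaceOf.subset_newtonDiagram {F : Set (Fin m → ℝ)}
    (hF : IsCompactFaceOf (NewtonPolyhedron f) F) : F ⊆ NewtonDiagram f :=
  Set.subset_biUnion_of_mem (u := id) hF

theorem IsMaximalFace.eq_newtonDiagram {γ : Set (Fin m → ℝ)} (hγ : IsMaximalFace f γ)
    (hΓ : IsCompactFaceOf (NewtonPolyhedron f) (NewtonDiagram f)) : γ = NewtonDiagram f :=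
  (hγ.2 _ hΓ hγ.1.subset_newtonDiagram).symm

theorem deltaSet_inter_level_subset (hw : ∀ i, 0 < w i)
    (hmin : ∀ β ∈ f.support, c ≤ w ⬝ᵥ expPt β) :
    DeltaSet f ∩ {x | w ⬝ᵥ x = c} ⊆ expPt '' f.support := by
  rintro x ⟨⟨β, hβ, hle⟩, hxc⟩
  refine ⟨β, hβ, funext fun i => ?_⟩
  have hmono : ∀ i ∈ Finset.univ, w i * expPt β i ≤ w i * x i :=
    fun i _ => mul_le_mul_of_nonneg_left (hle i) (hw i).le
  have heq : w ⬝ᵥ expPt β = w ⬝ᵥ x :=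
    le_antisymm (Finset.sum_le_sum hmono) ((hxc : w ⬝ᵥ x = c) ▸ hmin β hβ)
  exact mul_left_cancel₀ (hw i).ne'
    ((Finset.sum_eq_sum_iff_of_le hmono).1 heq i (Finset.mem_univ i))

theorem isCompactFaceOf_inter_level [NeZero m] (hw : ∀ i, 0 < w i)
    (hmin : ∀ β ∈ f.support, c ≤ w ⬝ᵥ expPt β) {β₀ : Fin m →₀ ℕ} (hβ₀ : β₀ ∈ f.support)
    (hc : w ⬝ᵥ expPt β₀ = c) :
    IsCompactFaceOf (NewtonPolyhedron f) {x ∈ NewtonPolyhedron f | w ⬝ᵥ x = c} := by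
  have hhull : {x ∈ NewtonPolyhedron f | w ⬝ᵥ x = c} =
      convexHull ℝ (DeltaSet f ∩ {x | w ⬝ᵥ x = c}) :=
    convexHull_inter_level (ℓ := dotProductBilin ℝ ℝ w)
      fun y hy => (deltaSet_subset_weightSuperlevel (fun i => (hw i).le) hmin hy).2
  refine ⟨⟨⟨expPt β₀, subset_convexHull ℝ _ (expPt_mem_deltaSet hβ₀), hc⟩, w, c,
    fun h => (hw 0).ne' (congr_fun h 0),
    fun x hx => (newtonPolyhedron_subset_weightSuperlevel (fun i => (hw i).le) hmin hx).2, rfl⟩, ?_⟩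
  rw [hhull]
  exact ((f.support.finite_toSet.image expPt).subset
    (deltaSet_inter_level_subset hw hmin)).isCompact_convexHull ℝ

theorem exists_mem_support_dotProduct_eq [NeZero m] (hw : ∀ i, 0 < w i)
    (hne : f.support.Nonempty) (hΓ : NewtonDiagram f = weightLevel w c) :
    ∃ β₀ ∈ f.support, w ⬝ᵥ expPt β₀ = c ∧ ∀ β ∈ f.support, c ≤ w ⬝ᵥ expPt β := by
  obtain ⟨β₀, hβ₀, hmin⟩ := f.support.exists_min_image (fun β => w ⬝ᵥ expPt β) hne
  have hmem : expPt β₀ ∈ NewtonDiagram f :=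
    (isCompactFaceOf_inter_level hw hmin hβ₀ rfl).subset_newtonDiagram
      ⟨subset_convexHull ℝ _ (expPt_mem_deltaSet hβ₀), rfl⟩
  have hc : w ⬝ᵥ expPt β₀ = c := (hΓ ▸ hmem).2
  exact ⟨β₀, hβ₀, hc, hc ▸ hmin⟩

theorem le_dotProduct_of_mem_support [NeZero m] (hw : ∀ i, 0 < w i)
    (hne : f.support.Nonempty) (hΓ : NewtonDiagram f = weightLevel w c) {β : Fin m →₀ ℕ}
    (hβ : β ∈ f.support) : c ≤ w ⬝ᵥ expPt β :=
  (exists_mem_support_dotProduct_eq hw hne hΓ).choose_spec.2.2 β hβ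

theorem isCompactFaceOf_newtonDiagram [NeZero m] (hw : ∀ i, 0 < w i)
    (hne : f.support.Nonempty) (hΓ : NewtonDiagram f = weightLevel w c) :
    IsCompactFaceOf (NewtonPolyhedron f) (NewtonDiagram f) := by
  obtain ⟨β₀, hβ₀, hc, hmin⟩ := exists_mem_support_dotProduct_eq hw hne hΓ
  convert isCompactFaceOf_inter_level hw hmin hβ₀ hc using 1
  ext x
  refine ⟨fun hx => ⟨newtonDiagram_subset_newtonPolyhedron hx, (hΓ ▸ hx : x ∈ weightLevel w c).2⟩,
    fun ⟨hxP, hxc⟩ => ?_⟩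
  rw [hΓ]
  exact ⟨(newtonPolyhedron_subset_weightSuperlevel (fun i => (hw i).le) hmin hxP).1, hxc⟩

theorem coeff_facePart_of_mem {γ : Set (Fin m → ℝ)} {β : Fin m →₀ ℕ} (h : expPt β ∈ γ) :
    coeff β (facePart f γ) = coeff β f := by
  simp only [facePart, coeff_sum, coeff_monomial, Finset.sum_ite_eq', Finset.mem_filter]
  split_ifs with hβ
  · rfl
  · exact (notMem_support_iff.1 fun hs => hβ ⟨hs, h⟩).symm

end NewtonPolyhedron

section SumsOfSquares

variable {m : ℕ} {Γ : Set (Fin m → ℝ)}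

def HasUniqueHalfSplitting (Γ : Set (Fin m → ℝ)) (V : Fin m →₀ ℕ) : Prop :=
  ∀ a b : Fin m →₀ ℕ, (2 : ℝ) • expPt a ∈ Γ → (2 : ℝ) • expPt b ∈ Γ → a + b = V → a = b

theorem coeff_sq_nonneg {σ : Type*} {q : MvPolynomial σ ℝ} {V : σ →₀ ℕ}
    (hq : ∀ a ∈ q.support, ∀ b ∈ q.support, a + b = V → a = b) : 0 ≤ coeff V (q ^ 2) := by
  rw [sq, coeff_mul]
  refine Finset.sum_nonneg fun x hx => ?_
  by_cases h : x.1 ∈ q.support ∧ x.2 ∈ q.support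
  · rw [hq _ h.1 _ h.2 (Finset.HasAntidiagonal.mem_antidiagonal.1 hx)]
    exact mul_self_nonneg _
  · rcases not_and_or.1 h with h | h <;> simp [notMem_support_iff.1 h]

theorem coeff_nonneg_of_mem_sosHalfSupported {V : Fin m →₀ ℕ} {p : MvPolynomial (Fin m) ℝ}
    (hV : HasUniqueHalfSplitting Γ V) (hp : p ∈ sosHalfSupported Γ) : 0 ≤ coeff V p := by
  obtain ⟨l, hl, rfl⟩ := hp
  rw [← coeffAddMonoidHom_apply, map_multiset_sum, Multiset.map_map]
  refine Multiset.sum_nonneg fun x hx => ?_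
  obtain ⟨q, hq, rfl⟩ := Multiset.mem_map.1 hx
  exact coeff_sq_nonneg fun a ha b hb => hV a b (hl q hq a ha) (hl q hq b hb)

theorem coeff_pos_of_memRint {β : Fin m →₀ ℕ} {g : MvPolynomial (Fin m) ℝ}
    (hV : HasUniqueHalfSplitting Γ (β + β)) (hβ : (2 : ℝ) • expPt β ∈ Γ)
    (hg : MemRint (sosHalfSupported Γ) g) : 0 < coeff (β + β) g := by
  have hsq : monomial β (1 : ℝ) ^ 2 ∈ sosHalfSupported Γ :=
    ⟨{monomial β 1}, by simpa [support_monomial] using hβ, by simp⟩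
  obtain ⟨μ, hμ, hmem⟩ := hg.2 _ hsq
  have h₀ := coeff_nonneg_of_mem_sosHalfSupported hV hmem
  have h₁ : coeff (β + β) (monomial β (1 : ℝ) ^ 2) = 1 := by
    rw [sq, monomial_mul, coeff_monomial, if_pos rfl, one_mul]
  rw [coeff_add, coeff_smul, coeff_smul, h₁, smul_eq_mul, smul_eq_mul] at h₀
  nlinarith

theorem hasUniqueHalfSplitting_single {w : Fin m → ℝ} {c : ℝ} (hw : ∀ i, 0 < w i) (j : Fin m)
    (v : ℕ) : HasUniqueHalfSplitting (weightLevel w c) (Finsupp.single j v) := by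
  intro a b ha hb hab
  have hzero : ∀ i ≠ j, a i = 0 ∧ b i = 0 := fun i hi => by
    have := DFunLike.congr_fun hab i
    rw [Finsupp.add_apply, Finsupp.single_eq_of_ne hi] at this
    omega
  have hlevel : ∀ x : Fin m →₀ ℕ, (∀ i ≠ j, x i = 0) → (2 : ℝ) • expPt x ∈ weightLevel w c →
      w j * (2 * x j) = c := by
    intro x hx hxc
    rw [← hxc.2, dotProduct, Finset.sum_eq_single j (fun i _ hi => by simp [expPt, hx i hi])
      (by simp)]
    rfl
  have hj : (2 * a j : ℝ) = 2 * b j := mul_left_cancel₀ (hw j).ne' <|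
    (hlevel a (fun i hi => (hzero i hi).1) ha).trans (hlevel b (fun i hi => (hzero i hi).2) hb).symm
  ext i
  rcases eq_or_ne i j with rfl | hi
  · exact_mod_cast mul_left_cancel₀ two_ne_zero hj
  · rw [(hzero i hi).1, (hzero i hi).2]

end SumsOfSquares

theorem expPt_mem_deltaESet {m : ℕ} {g : MvPolynomial (Fin m) ℝ} {V B : Fin m →₀ ℕ}
    (hV : V ∈ g.support) (hVe : ∀ i, Even (V i)) (hle : V ≤ B) : expPt B ∈ DeltaESet g :=
  ⟨V, hV, hVe, fun i => Nat.cast_le.2 (hle i)⟩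

theorem memBconv_of_add_eq {m : ℕ} {E : Set (Fin m → ℝ)} {α A₁ A₂ : Fin m →₀ ℕ}
    (h₁ : expPt A₁ ∈ E ∧ ∀ i, Even (A₁ i)) (h₂ : expPt A₂ ∈ E ∧ ∀ i, Even (A₂ i))
    (h : A₁ + A₂ = α + α) : MemBconv E α := by
  refine ⟨2, 1, ![A₁, A₂], fun _ _ => true, two_pos, fun s => ?_, fun _ => by norm_num,
    by norm_num, fun _ => ⟨0, rfl⟩, fun i => ?_⟩
  · fin_cases s
    exacts [h₁, h₂]
  · have : (A₁ i : ℚ) + A₂ i = α i + α i := by exact_mod_cast DFunLike.congr_fun h i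
    simp [Fin.sum_univ_two]
    linarith

section SlantedSimplex

variable {n k : ℕ}

def slantWeight (n k : ℕ) : Fin (n + 1) → ℕ := Fin.lastCases 1 fun _ => k

def halfVertex (n k : ℕ) (j : Fin (n + 1)) : Fin (n + 1) →₀ ℕ :=
  Finsupp.single j (Fin.lastCases k (fun _ => 1) j)

theorem slantWeight_pos (hk : 0 < k) (i : Fin (n + 1)) : 0 < slantWeight n k i := by
  induction i using Fin.lastCases <;> simp [slantWeight, hk]

theorem dotProduct_slantWeight (x : Fin (n + 1) → ℝ) :
    (fun i => (slantWeight n k i : ℝ)) ⬝ᵥ x =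
      (∑ i : Fin n, (k : ℝ) * x i.castSucc) + x (Fin.last n) := by
  simp [dotProduct, Fin.sum_univ_castSucc, slantWeight]

theorem weight_halfVertex (j : Fin (n + 1)) :
    Finsupp.weight (slantWeight n k) (halfVertex n k j) = k := by
  induction j using Fin.lastCases <;> simp [halfVertex, slantWeight, Finsupp.weight_single]

theorem expPt_two_nsmul_halfVertex (hk : 0 < k) (j : Fin (n + 1)) :
    expPt (2 • halfVertex n k j) = Pi.single j ((2 * k : ℝ) / slantWeight n k j) := by
  rw [halfVertex, Finsupp.smul_single, expPt_single]
  congr 1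
  induction j using Fin.lastCases <;> simp [slantWeight, hk.ne']

theorem expPt_two_nsmul_halfVertex_mem (hk : 0 < k) (j : Fin (n + 1)) :
    expPt (2 • halfVertex n k j) ∈ weightLevel (fun i => (slantWeight n k i : ℝ)) (2 * k) := by
  rw [expPt_two_nsmul_halfVertex hk]
  exact single_div_mem_weightLevel (Nat.cast_pos.2 (slantWeight_pos hk j)) (by positivity)

theorem coeff_two_nsmul_halfVertex_pos (hk : 0 < k) {f : MvPolynomial (Fin (n + 1)) ℝ}
    (hΓ : NewtonDiagram f = weightLevel (fun i => (slantWeight n k i : ℝ)) (2 * k))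
    (hrint : MemRint (sosHalfSupported (NewtonDiagram f)) (facePart f (NewtonDiagram f)))
    (j : Fin (n + 1)) : 0 < coeff (2 • halfVertex n k j) (facePart f (NewtonDiagram f)) := by
  have hmem : (2 : ℝ) • expPt (halfVertex n k j) ∈ NewtonDiagram f := by
    rw [hΓ, ← Nat.cast_two (R := ℝ), ← expPt_nsmul]
    exact expPt_two_nsmul_halfVertex_mem hk j
  rw [two_nsmul]
  refine coeff_pos_of_memRint ?_ hmem hrint
  rw [hΓ, halfVertex, ← Finsupp.single_add]
  exact hasUniqueHalfSplitting_single (fun i => Nat.cast_pos.2 (slantWeight_pos hk i)) _ _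

theorem exists_halfVertex_le {α : Fin (n + 1) →₀ ℕ}
    (h : k ≤ Finsupp.weight (slantWeight n k) α) : ∃ j, halfVertex n k j ≤ α := by
  by_cases hi : ∃ i : Fin n, α i.castSucc ≠ 0
  · obtain ⟨i, hi⟩ := hi
    refine ⟨i.castSucc, ?_⟩
    simpa [halfVertex, Finsupp.single_le_iff] using Nat.one_le_iff_ne_zero.2 hi
  · push Not at hi
    refine ⟨Fin.last n, ?_⟩
    simpa [halfVertex, Finsupp.single_le_iff, Finsupp.weight_eq_sum, Fin.sum_univ_castSucc, hi,
      slantWeight] using h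

theorem exists_halfVertex_add_le {α : Fin (n + 1) →₀ ℕ}
    (h : 2 * k ≤ Finsupp.weight (slantWeight n k) α) :
    ∃ j₁ j₂, halfVertex n k j₁ + halfVertex n k j₂ ≤ α := by
  obtain ⟨j₁, hj₁⟩ := exists_halfVertex_le (h.trans' (by omega))
  have hrest :=
    map_add (Finsupp.weight (slantWeight n k)) (α - halfVertex n k j₁) (halfVertex n k j₁)
  rw [tsub_add_cancel_of_le hj₁, weight_halfVertex] at hrest
  obtain ⟨j₂, hj₂⟩ := exists_halfVertex_le (k := k) (α := α - halfVertex n k j₁) (by omega)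
  exact ⟨j₁, j₂, (le_tsub_iff_left hj₁).1 hj₂⟩

theorem memBconv_of_two_mul_le_weight {g : MvPolynomial (Fin (n + 1)) ℝ}
    (hV : ∀ j, 2 • halfVertex n k j ∈ g.support) {α : Fin (n + 1) →₀ ℕ}
    (hα : 2 * k ≤ Finsupp.weight (slantWeight n k) α) : MemBconv (DeltaESet g) α := by
  obtain ⟨j₁, j₂, hj⟩ := exists_halfVertex_add_le hα
  have hj₂ : halfVertex n k j₂ ≤ α := le_of_add_le_right hj
  refine memBconv_of_add_eq (A₁ := 2 • (α - halfVertex n k j₂)) (A₂ := 2 • halfVertex n k j₂)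
    ⟨expPt_mem_deltaESet (hV j₁) (fun _ => by simp)
      (nsmul_le_nsmul_right (le_tsub_of_add_le_right hj) 2), fun _ => by simp⟩
    ⟨expPt_mem_deltaESet (hV j₂) (fun _ => by simp) le_rfl, fun _ => by simp⟩ ?_
  rw [← smul_add, tsub_add_cancel_of_le hj₂, two_nsmul]

end SlantedSimplex

theorem regular_of_slanted_plane_diagram_general {n : ℕ} (f : MvPolynomial (Fin (n + 1)) ℝ)
    (k : ℕ) (hk : 0 < k)
    (hΓ : NewtonDiagram f = {x : Fin (n + 1) → ℝ | (∀ i, 0 ≤ x i) ∧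
      (∑ i : Fin n, (k : ℝ) * x i.castSucc) + x (Fin.last n) = 2 * k})
    (hrint : MemRint (sosHalfSupported (NewtonDiagram f)) (facePart f (NewtonDiagram f))) :
    RegularNewtonPolyhedron f := by
  set w : Fin (n + 1) → ℝ := fun i => (slantWeight n k i : ℝ)
  have hw : ∀ i, 0 < w i := fun i => Nat.cast_pos.2 (slantWeight_pos hk i)
  have hΓ' : NewtonDiagram f = weightLevel w (2 * k) := by
    rw [hΓ, weightLevel]
    simp only [dotProduct_slantWeight, Pi.le_def, Pi.zero_apply, w]
  have hface := coeff_two_nsmul_halfVertex_pos hk hΓ' hrint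
  have hcoeff : ∀ j, 0 < coeff (2 • halfVertex n k j) f := fun j => by
    rw [← coeff_facePart_of_mem (hΓ' ▸ expPt_two_nsmul_halfVertex_mem hk j)]
    exact hface j
  have hsupp : ∀ j, 2 • halfVertex n k j ∈ f.support := fun j => mem_support_iff.2 (hcoeff j).ne'
  have hne : f.support.Nonempty := ⟨_, hsupp 0⟩
  have hle : ∀ β ∈ f.support, 2 * k ≤ w ⬝ᵥ expPt β :=
    fun _ hβ => le_dotProduct_of_mem_support hw hne hΓ' hβ
  have hP : NewtonPolyhedron f = weightSuperlevel w (2 * k) :=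
    subset_antisymm (newtonPolyhedron_subset_weightSuperlevel (fun i => (hw i).le) hle)
      (weightSuperlevel_subset_newtonPolyhedron hw (by positivity)
        fun j => expPt_two_nsmul_halfVertex hk j ▸ expPt_mem_deltaSet (hsupp j))
  refine ⟨fun α hα => ?_, fun γ hγ α hα _ _ _ => ?_⟩
  · obtain ⟨j, hj⟩ := exists_eq_single_of_mem_extremePoints hw (by positivity) (hP ▸ hα)
    obtain rfl := expPt_injective (hj.trans (expPt_two_nsmul_halfVertex hk j).symm)
    exact ⟨fun _ => by simp, hcoeff j⟩
  · rw [hγ.eq_newtonDiagram (isCompactFaceOf_newtonDiagram hw hne hΓ')]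
    refine memBconv_of_two_mul_le_weight (fun j => mem_support_iff.2 (hface j).ne') ?_
    exact_mod_cast (cast_weight_eq_dotProduct (slantWeight n k) α).symm ▸ hle α hα

/-- If the Newton diagram of `f ∈ ℝ[x₁,…,x_{n+1}]` is the full set of nonnegative points of the
hyperplane `k x₁ + ⋯ + k x_n + x_{n+1} = 2k` for some `k ≥ 1`, and `f_Γ` lies in the relative
interior of the SOS cone supported in `(1/2)Γ`, then `f` has a regular Newton polyhedron. -/
theorem regular_of_slanted_plane_diagram {n : ℕ} (f : MvPolynomial (Fin (n + 1)) ℝ)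
    (hf0 : MvPolynomial.eval (0 : Fin (n + 1) → ℝ) f = 0)
    (k : ℕ) (hk : 0 < k)
    (hΓ : NewtonDiagram f = {x : Fin (n + 1) → ℝ | (∀ i, 0 ≤ x i) ∧
      (∑ i : Fin n, (k : ℝ) * x i.castSucc) + x (Fin.last n) = 2 * k})
    (hrint : MemRint (sosHalfSupported (NewtonDiagram f)) (facePart f (NewtonDiagram f))) :
    RegularNewtonPolyhedron f :=
  regular_of_slanted_plane_diagram_general f k hk hΓ hrint

end
end
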